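/- arXiv:2010.08588 — 3 statements merged into one kernel-verified Lean document; each statement's English description precedes it below -/
import Mathlib

section
/- For distinguishing two real qubit pure states |ψ₁⟩, |ψ₂⟩ with equal priors 1/2, the Helstrom bound gives optimal success probability (1 + √(1 − |⟨ψ₁|ψ₂⟩|²))/2, i.e., for any two-outcome POVM {Π, I−Π}, (1/2)⟨ψ₁|Π|ψ₁⟩ + (1/2)⟨ψ₂|(I−Π)|ψ₂⟩ ≤ (1 + √(1 − |⟨ψ₁|ψ₂⟩|²))/2. -/
/-!
Write `a = ⟨ψ₁|E|ψ₁⟩` and `b = ⟨ψ₂|E|ψ₂⟩`, so that the success probability is `(1 + a - b)/2`.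
Splitting `⟨ψ₁|ψ₂⟩ = ⟨ψ₁|E|ψ₂⟩ + ⟨ψ₁|I - E|ψ₂⟩` and applying Cauchy–Schwarz to the semi-inner
products given by `E` and `I - E` gives `|⟨ψ₁|ψ₂⟩| ≤ √(ab) + √((1 - a)(1 - b))`.
With `a = x²`, `1 - a = x'²`, `b = y²`, `1 - b = y'²`, Lagrange's identity turns this into
`(a - b)² ≤ 1 - |⟨ψ₁|ψ₂⟩|²`.
-/

open scoped ComplexOrder
open Matrix

theorem sq_sub_sq_add_sq_mul_add_mul_le_one {x x' y y' : ℝ} (hx : x ^ 2 + x' ^ 2 = 1)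
    (hy : y ^ 2 + y' ^ 2 = 1) :
    (x ^ 2 - y ^ 2) ^ 2 + (x * y + x' * y') ^ 2 ≤ 1 := by
  have lagrange : (x * y + x' * y') ^ 2 + (x * y' - x' * y) ^ 2 = 1 := by
    linear_combination (x ^ 2 + x' ^ 2) * hy + hx
  have factor : x ^ 2 - y ^ 2 = (x * y' - x' * y) * (x * y' + x' * y) := by
    linear_combination y ^ 2 * hx - x ^ 2 * hy
  have cauchy_schwarz : (x * y' + x' * y) ^ 2 ≤ 1 := by
    nlinarith [sq_nonneg (x * y - x' * y')]
  rw [factor, mul_pow]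
  nlinarith [sq_nonneg (x * y' - x' * y)]

theorem sq_sub_add_sq_sqrt_add_sqrt_le_one {a b : ℝ} (ha₀ : 0 ≤ a) (ha₁ : a ≤ 1) (hb₀ : 0 ≤ b)
    (hb₁ : b ≤ 1) :
    (a - b) ^ 2 + (√(a * b) + √((1 - a) * (1 - b))) ^ 2 ≤ 1 := by
  have key := sq_sub_sq_add_sq_mul_add_mul_le_one (x := √a) (x' := √(1 - a)) (y := √b)
    (y' := √(1 - b)) (by simp [ha₀, ha₁]) (by simp [hb₀, hb₁])
  rwa [Real.sq_sqrt ha₀, Real.sq_sqrt hb₀, ← Real.sqrt_mul ha₀,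
    ← Real.sqrt_mul (sub_nonneg.2 ha₁)] at key

namespace Matrix

variable {n 𝕜 : Type*} [Fintype n] [RCLike 𝕜]

theorem PosSemidef.norm_dotProduct_mulVec_sq_le {M : Matrix n n 𝕜} (hM : M.PosSemidef)
    (x y : n → 𝕜) :
    ‖star x ⬝ᵥ M *ᵥ y‖ ^ 2 ≤ RCLike.re (star x ⬝ᵥ M *ᵥ x) * RCLike.re (star y ⬝ᵥ M *ᵥ y) := by
  let := M.toSeminormedAddCommGroup hM
  let := M.toInnerProductSpace hM
  have hinner (u v : n → 𝕜) : inner 𝕜 u v = star u ⬝ᵥ M *ᵥ v := dotProduct_comm _ _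
  have := inner_mul_inner_self_le (𝕜 := 𝕜) x y
  rwa [← inner_conj_symm y x, RCLike.norm_conj, ← sq, hinner, hinner, hinner] at this

theorem PosSemidef.norm_dotProduct_le_sqrt_add_sqrt [DecidableEq n] {E : Matrix n n 𝕜}
    (hE : E.PosSemidef) (hE' : (1 - E).PosSemidef) (u v : n → 𝕜) :
    ‖star u ⬝ᵥ v‖ ≤ √(RCLike.re (star u ⬝ᵥ E *ᵥ u) * RCLike.re (star v ⬝ᵥ E *ᵥ v)) +
      √(RCLike.re (star u ⬝ᵥ (1 - E) *ᵥ u) * RCLike.re (star v ⬝ᵥ (1 - E) *ᵥ v)) := by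
  have split : star u ⬝ᵥ v = star u ⬝ᵥ E *ᵥ v + star u ⬝ᵥ (1 - E) *ᵥ v := by
    simp [sub_mulVec, dotProduct_sub]
  calc ‖star u ⬝ᵥ v‖ ≤ ‖star u ⬝ᵥ E *ᵥ v‖ + ‖star u ⬝ᵥ (1 - E) *ᵥ v‖ :=
        split ▸ norm_add_le _ _
    _ ≤ _ := add_le_add (Real.le_sqrt_of_sq_le (hE.norm_dotProduct_mulVec_sq_le u v))
        (Real.le_sqrt_of_sq_le (hE'.norm_dotProduct_mulVec_sq_le u v))

end Matrix

/-- Helstrom bound for two pure states with equal priors: for unit vectors `ψ₁, ψ₂ ∈ ℂ²` and any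
two-outcome POVM `{E, I − E}`, the success probability is at most
`(1 + √(1 − |⟨ψ₁|ψ₂⟩|²))/2`. -/
theorem helstrom_pure_states (ψ₁ ψ₂ : Fin 2 → ℂ)
    (h₁ : star ψ₁ ⬝ᵥ ψ₁ = 1) (h₂ : star ψ₂ ⬝ᵥ ψ₂ = 1)
    (E : Matrix (Fin 2) (Fin 2) ℂ) (hE : E.PosSemidef) (hE' : (1 - E).PosSemidef) :
    (1/2) * (star ψ₁ ⬝ᵥ E.mulVec ψ₁).re + (1/2) * (star ψ₂ ⬝ᵥ (1 - E).mulVec ψ₂).re ≤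
      (1 + Real.sqrt (1 - ‖star ψ₁ ⬝ᵥ ψ₂‖ ^ 2)) / 2 := by
  have complement (ψ : Fin 2 → ℂ) (hψ : star ψ ⬝ᵥ ψ = 1) :
      (star ψ ⬝ᵥ (1 - E) *ᵥ ψ).re = 1 - (star ψ ⬝ᵥ E *ᵥ ψ).re := by
    rw [sub_mulVec, one_mulVec, dotProduct_sub, hψ, Complex.sub_re, Complex.one_re]
  have fidelity := hE.norm_dotProduct_le_sqrt_add_sqrt hE' ψ₁ ψ₂
  have ha₀ := hE.re_dotProduct_nonneg ψ₁
  have hb₀ := hE.re_dotProduct_nonneg ψ₂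
  have ha₁ := hE'.re_dotProduct_nonneg ψ₁
  have hb₁ := hE'.re_dotProduct_nonneg ψ₂
  simp only [RCLike.re_to_complex, complement ψ₁ h₁, complement ψ₂ h₂, sub_nonneg]
    at fidelity ha₀ hb₀ ha₁ hb₁
  have bound := sq_sub_add_sq_sqrt_add_sqrt_le_one ha₀ ha₁ hb₀ hb₁
  have gap : (star ψ₁ ⬝ᵥ E *ᵥ ψ₁).re - (star ψ₂ ⬝ᵥ E *ᵥ ψ₂).re ≤ √(1 - ‖star ψ₁ ⬝ᵥ ψ₂‖ ^ 2) :=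
    Real.le_sqrt_of_sq_le (by nlinarith [pow_le_pow_left₀ (norm_nonneg _) fidelity 2])
  rw [complement ψ₂ h₂]
  linarith
end

section
/- For any two density matrices ρ₁, ρ₂ with priors q, 1−q and any two-outcome POVM {Π, I−Π}, the success probability satisfies q·Tr(Πρ₁) + (1−q)·Tr((I−Π)ρ₂) ≤ (1 + ‖qρ₁ − (1−q)ρ₂‖₁)/2, where ‖·‖₁ is the trace norm. -/
open scoped ComplexOrder
open Matrix

/-- The trace norm `‖A‖₁ = Tr √(A†A)` of a complex square matrix. -/
noncomputable def traceNorm {d : ℕ} (A : Matrix (Fin d) (Fin d) ℂ) : ℝ :=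
  (((Matrix.posSemidef_conjTranspose_mul_self A).1.eigenvectorUnitary.1 *
    diagonal (fun i => ((Real.sqrt
      ((Matrix.posSemidef_conjTranspose_mul_self A).1.eigenvalues i) : ℝ) : ℂ)) *
    (star (Matrix.posSemidef_conjTranspose_mul_self A).1.eigenvectorUnitary :
      Matrix (Fin d) (Fin d) ℂ)).trace).re

/-!
In an eigenbasis of the Hermitian matrix `Δ = qρ₁ - (1 - q)ρ₂` the diagonal entries `cᵢ` of `E`
lie in `[0, 1]` because `0 ≤ E ≤ 1`, so `Re Tr(EΔ) = ∑ cᵢ λᵢ ≤ ∑ max(λᵢ, 0) = (‖Δ‖₁ + Tr Δ) / 2`,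
using `‖Δ‖₁ = ∑ |λᵢ|`. The success probability is `(1 - q) + Re Tr(EΔ)` and `Tr Δ = 2q - 1`.
-/

namespace Matrix

variable {n 𝕜 : Type*} [Fintype n] [DecidableEq n] [RCLike 𝕜] {A E : Matrix n n 𝕜}

lemma IsHermitian.trace_cfc (hA : A.IsHermitian) (f : ℝ → ℝ) :
    (cfc f A).trace = ∑ i, (f (hA.eigenvalues i) : 𝕜) := by
  rw [hA.cfc_eq, IsHermitian.cfc, Unitary.conjStarAlgAut_apply, trace_mul_cycle,
    Unitary.star_mul_self_of_mem hA.eigenvectorUnitary.2, one_mul, trace_diagonal]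
  rfl

lemma IsHermitian.trace_mul_eq_sum (hA : A.IsHermitian) (E : Matrix n n 𝕜) :
    (E * A).trace = ∑ i,
      (star (hA.eigenvectorUnitary : Matrix n n 𝕜) * E * hA.eigenvectorUnitary) i i *
        hA.eigenvalues i := by
  conv_lhs => rw [hA.spectral_theorem, Unitary.conjStarAlgAut_apply, ← mul_assoc, ← mul_assoc,
    trace_mul_cycle, ← mul_assoc]
  simp only [trace, diag, mul_diagonal, Function.comp_apply]

lemma IsHermitian.re_trace_mul_le_sum_max_eigenvalues (hA : A.IsHermitian) (hE : E.PosSemidef)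
    (hE' : (1 - E).PosSemidef) :
    RCLike.re (E * A).trace ≤ ∑ i, max (hA.eigenvalues i) 0 := by
  set U : Matrix n n 𝕜 := (hA.eigenvectorUnitary : Matrix n n 𝕜)
  have hU : star U * U = 1 := Unitary.star_mul_self_of_mem hA.eigenvectorUnitary.2
  have hM : (star U * E * U).PosSemidef := by
    simpa [star_eq_conjTranspose] using hE.conjTranspose_mul_mul_same U
  have hM' : (1 - star U * E * U).PosSemidef := by
    have := hE'.conjTranspose_mul_mul_same U
    rwa [Matrix.mul_sub, Matrix.sub_mul, Matrix.mul_one, ← star_eq_conjTranspose, hU] at this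
  rw [hA.trace_mul_eq_sum, map_sum]
  refine Finset.sum_le_sum fun i _ => ?_
  have h0 : 0 ≤ RCLike.re ((star U * E * U) i i) :=
    (RCLike.nonneg_iff.mp (hM.diag_nonneg (i := i))).1
  have h1 : RCLike.re ((star U * E * U) i i) ≤ 1 := by
    simpa only [sub_apply, one_apply_eq, map_sub, RCLike.one_re, sub_nonneg] using
      (RCLike.nonneg_iff.mp (hM'.diag_nonneg (i := i))).1
  rw [RCLike.re_mul_ofReal]
  rcases le_total 0 (hA.eigenvalues i) with h | h
  · rw [max_eq_left h]; nlinarith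
  · rw [max_eq_right h]; nlinarith

end Matrix

lemma traceNorm_eq_re_trace_cfc_sqrt {d : ℕ} (A : Matrix (Fin d) (Fin d) ℂ) :
    traceNorm A = (cfc Real.sqrt (Aᴴ * A)).trace.re := by
  rw [(posSemidef_conjTranspose_mul_self A).1.cfc_eq, IsHermitian.cfc,
    Unitary.conjStarAlgAut_apply]
  rfl

lemma Matrix.IsHermitian.traceNorm_eq_sum_abs_eigenvalues {d : ℕ}
    {A : Matrix (Fin d) (Fin d) ℂ} (hA : A.IsHermitian) :
    traceNorm A = ∑ i, |hA.eigenvalues i| := by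
  have hsq : Aᴴ * A = cfc (· ^ 2 : ℝ → ℝ) A := by rw [hA.eq, cfc_pow_id A 2, sq]
  rw [traceNorm_eq_re_trace_cfc_sqrt, hsq, ← cfc_comp' Real.sqrt (· ^ 2) A, hA.trace_cfc,
    Complex.re_sum]
  simp [Real.sqrt_sq_eq_abs]

lemma Matrix.IsHermitian.re_trace_mul_le_traceNorm {d : ℕ} {A E : Matrix (Fin d) (Fin d) ℂ}
    (hA : A.IsHermitian) (hE : E.PosSemidef) (hE' : (1 - E).PosSemidef) :
    (E * A).trace.re ≤ (traceNorm A + A.trace.re) / 2 := by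
  have hpos (x : ℝ) : max x 0 = (|x| + x) / 2 := by
    rcases le_total 0 x with h | h <;> simp [h, abs_of_nonneg, abs_of_nonpos]
  rw [hA.traceNorm_eq_sum_abs_eigenvalues, hA.trace_eq_sum_eigenvalues, Complex.re_sum]
  calc (E * A).trace.re ≤ ∑ i, max (hA.eigenvalues i) 0 :=
        hA.re_trace_mul_le_sum_max_eigenvalues hE hE'
    _ = _ := by simp only [hpos, ← Finset.sum_div, Finset.sum_add_distrib,
      Complex.coe_algebraMap, Complex.ofReal_re]

theorem helstrom_bound_general {d : ℕ} (ρ₁ ρ₂ : Matrix (Fin d) (Fin d) ℂ)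
    (hρ₁ : ρ₁.PosSemidef) (hρ₂ : ρ₂.PosSemidef)
    (htr₁ : ρ₁.trace = 1) (htr₂ : ρ₂.trace = 1)
    (q : ℝ)
    (E : Matrix (Fin d) (Fin d) ℂ) (hE : E.PosSemidef) (hE' : (1 - E).PosSemidef) :
    q * ((E * ρ₁).trace.re) + (1 - q) * (((1 - E) * ρ₂).trace.re) ≤
      (1 + traceNorm ((q : ℂ) • ρ₁ - ((1 - q : ℝ) : ℂ) • ρ₂)) / 2 := by
  set Δ := (q : ℂ) • ρ₁ - ((1 - q : ℝ) : ℂ) • ρ₂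
  have hΔ : Δ.IsHermitian :=
    (hρ₁.1.smul (Complex.conj_ofReal q)).sub (hρ₂.1.smul (Complex.conj_ofReal (1 - q)))
  have hsuccess : q * (E * ρ₁).trace.re + (1 - q) * ((1 - E) * ρ₂).trace.re =
      (1 - q) + (E * Δ).trace.re := by
    simp only [Δ, Matrix.mul_sub, Matrix.sub_mul, Matrix.mul_smul, Matrix.one_mul, trace_sub,
      trace_smul, htr₂, smul_eq_mul, Complex.sub_re, Complex.re_ofReal_mul, Complex.one_re]
    ring
  have htrΔ : Δ.trace.re = 2 * q - 1 := by
    simp only [Δ, trace_sub, trace_smul, htr₁, htr₂, smul_eq_mul, mul_one, Complex.sub_re,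
      Complex.ofReal_re]
    ring
  linarith [hΔ.re_trace_mul_le_traceNorm hE hE']

/-- Helstrom bound for binary state discrimination: for density matrices `ρ₁, ρ₂` with priors
`q, 1 − q` and any two-outcome POVM `{E, I − E}`,
`q Tr(Eρ₁) + (1−q) Tr((I−E)ρ₂) ≤ (1 + ‖qρ₁ − (1−q)ρ₂‖₁)/2`. -/
theorem helstrom_bound {d : ℕ} (ρ₁ ρ₂ : Matrix (Fin d) (Fin d) ℂ)
    (hρ₁ : ρ₁.PosSemidef) (hρ₂ : ρ₂.PosSemidef)
    (htr₁ : ρ₁.trace = 1) (htr₂ : ρ₂.trace = 1)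
    (q : ℝ) (hq0 : 0 ≤ q) (hq1 : q ≤ 1)
    (E : Matrix (Fin d) (Fin d) ℂ) (hE : E.PosSemidef) (hE' : (1 - E).PosSemidef) :
    q * ((E * ρ₁).trace.re) + (1 - q) * (((1 - E) * ρ₂).trace.re) ≤
      (1 + traceNorm ((q : ℂ) • ρ₁ - ((1 - q : ℝ) : ℂ) • ρ₂)) / 2 :=
  helstrom_bound_general ρ₁ ρ₂ hρ₁ hρ₂ htr₁ htr₂ q E hE hE'
end

section
/- For the trine ensemble with uniform priors on a single qubit, any POVM has success probability at most 2/3, so the optimal single-copy (locally greedy per-copy) success probability is 2/3; consequently on n copies measured independently and greedily the success probability is bounded by quantities strictly less than the collective optimum (3+2√2)/6 for n = 2. -/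
/-!
For a unit vector `v`, `Q = 1 - v v*` is a Hermitian idempotent, so for `E ≥ 0` we get
`tr E - tr (E v v*) = tr (Q E Q) ≥ 0`. Summing over a POVM, the total weight
`∑ⱼ tr (Eⱼ |ψⱼ⟩⟨ψⱼ|)` is at most `tr 1 = 2`. The bound is attained because the trine is a tight
frame, `∑ⱼ |ψⱼ⟩⟨ψⱼ| = (3/2) • 1`, so `Eⱼ = (2/3) |ψⱼ⟩⟨ψⱼ|` is a POVM with `tr (Eⱼ |ψⱼ⟩⟨ψⱼ|) = 2/3`.
-/

open scoped ComplexOrder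
open Matrix

/-- The trine qubit state `|ψⱼ⟩ = (cos(2πj/3), sin(2πj/3))ᵀ`. -/
noncomputable def trine (j : Fin 3) : Fin 2 → ℂ :=
  ![(Real.cos (2 * Real.pi * j / 3) : ℂ), (Real.sin (2 * Real.pi * j / 3) : ℂ)]

/-- The rank-one outer product `|ψⱼ⟩⟨ψⱼ|`. -/
noncomputable def trineProj (j : Fin 3) : Matrix (Fin 2) (Fin 2) ℂ :=
  vecMulVec (trine j) (star (trine j))

namespace Matrix

variable {n : Type*} [Fintype n]

theorem vecMulVec_star_mul_self_of_unit {R : Type*} [CommSemiring R] [StarRing R] {v : n → R}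
    (hv : star v ⬝ᵥ v = 1) :
    vecMulVec v (star v) * vecMulVec v (star v) = vecMulVec v (star v) := by
  rw [vecMulVec_mul_vecMulVec, hv, one_smul]

theorem trace_vecMulVec_star_of_unit {R : Type*} [CommSemiring R] [StarRing R] {v : n → R}
    (hv : star v ⬝ᵥ v = 1) : (vecMulVec v (star v)).trace = 1 := by
  rw [trace_vecMulVec, dotProduct_comm, hv]

variable {𝕜 : Type*} [RCLike 𝕜] [DecidableEq n]

theorem PosSemidef.trace_mul_vecMulVec_star_le {E : Matrix n n 𝕜} (hE : E.PosSemidef)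
    {v : n → 𝕜} (hv : star v ⬝ᵥ v = 1) : (E * vecMulVec v (star v)).trace ≤ E.trace := by
  set Q := 1 - vecMulVec v (star v)
  have hQ : Qᴴ = Q := by
    simp only [Q, conjTranspose_sub, conjTranspose_one, (posSemidef_vecMulVec_self_star v).1.eq]
  have hQQ : Q * Q = Q := by
    simp only [Q, sub_mul, mul_sub, one_mul, mul_one, vecMulVec_star_mul_self_of_unit hv,
      sub_self, sub_zero]
  have : 0 ≤ (E * Q).trace := by
    rw [← hQQ, ← mul_assoc, trace_mul_comm, ← mul_assoc]
    nth_rewrite 1 [← hQ]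
    exact (hE.conjTranspose_mul_mul_same Q).trace_nonneg
  rwa [mul_sub, mul_one, trace_sub, sub_nonneg] at this

theorem sum_trace_mul_vecMulVec_star_le_card {ι : Type*} [Fintype ι] {E : ι → Matrix n n 𝕜}
    (hE : ∀ i, (E i).PosSemidef) (hsum : ∑ i, E i = 1) {v : ι → n → 𝕜}
    (hv : ∀ i, star (v i) ⬝ᵥ v i = 1) :
    ∑ i, (E i * vecMulVec (v i) (star (v i))).trace ≤ Fintype.card n :=
  calc ∑ i, (E i * vecMulVec (v i) (star (v i))).trace
      ≤ ∑ i, (E i).trace := Finset.sum_le_sum fun i _ ↦ (hE i).trace_mul_vecMulVec_star_le (hv i)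
    _ = Fintype.card n := by rw [← trace_sum, hsum, trace_one]

end Matrix

theorem star_trine_dotProduct_self (j : Fin 3) : star (trine j) ⬝ᵥ trine j = 1 := by
  simp only [trine, dotProduct, Fin.sum_univ_two, Pi.star_apply, cons_val_zero, cons_val_one,
    RCLike.star_def, Complex.conj_ofReal, ← sq]
  exact_mod_cast Real.cos_sq_add_sin_sq _

theorem trine_zero : trine 0 = ![1, 0] := by
  simp [trine]

theorem trine_one : trine 1 = ![((-(1/2) : ℝ) : ℂ), ((√3 / 2 : ℝ) : ℂ)] := by
  have hθ : 2 * Real.pi * ((1 : Fin 3) : ℕ) / 3 = Real.pi - Real.pi / 3 := by simp; ring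
  simp only [trine, hθ, Real.cos_pi_sub, Real.sin_pi_sub, Real.cos_pi_div_three,
    Real.sin_pi_div_three]

theorem trine_two : trine 2 = ![((-(1/2) : ℝ) : ℂ), ((-(√3 / 2) : ℝ) : ℂ)] := by
  have hθ : 2 * Real.pi * ((2 : Fin 3) : ℕ) / 3 = Real.pi / 3 + Real.pi := by simp; ring
  simp only [trine, hθ, Real.cos_add_pi, Real.sin_add_pi, Real.cos_pi_div_three,
    Real.sin_pi_div_three]

theorem sum_trineProj : ∑ j, trineProj j = (3 / 2 : ℂ) • 1 := by
  have h3 : ((√3 : ℝ) : ℂ) / 2 * (√3 / 2) = 3 / 4 := by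
    rw [div_mul_div_comm, ← Complex.ofReal_mul, Real.mul_self_sqrt (by norm_num)]
    norm_num
  simp only [Fin.sum_univ_three, trineProj, trine_zero, trine_one, trine_two]
  ext i k
  simp only [Matrix.add_apply, vecMulVec_apply, Pi.star_apply, Matrix.smul_apply]
  fin_cases i <;> fin_cases k <;> norm_num [h3]

/-- For the trine ensemble with uniform priors: every POVM on a single qubit has success
probability at most `2/3`, this value is achieved by some POVM (so the optimal single-copy
success probability is `2/3`), and `2/3` is strictly less than the collective optimum
`(3 + 2√2)/6` for two copies. -/
theorem trine_single_copy_optimum :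
    (∀ E : Fin 3 → Matrix (Fin 2) (Fin 2) ℂ,
      (∀ j, (E j).PosSemidef) → (∑ j, E j = 1) →
      ∑ j, (1/3 : ℝ) * ((E j * trineProj j).trace.re) ≤ 2/3) ∧
    (∃ E : Fin 3 → Matrix (Fin 2) (Fin 2) ℂ,
      (∀ j, (E j).PosSemidef) ∧ (∑ j, E j = 1) ∧
      ∑ j, (1/3 : ℝ) * ((E j * trineProj j).trace.re) = 2/3) ∧
    (2/3 : ℝ) < (3 + 2 * Real.sqrt 2) / 6 := by
  refine ⟨fun E hE hsum ↦ ?_, ⟨fun j ↦ (2 / 3 : ℂ) • trineProj j, fun j ↦ ?_, ?_, ?_⟩, ?_⟩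
  · have hle : ∑ j, (E j * trineProj j).trace.re ≤ 2 := by
      have := sum_trace_mul_vecMulVec_star_le_card hE hsum star_trine_dotProduct_self
      rw [Fintype.card_fin, Complex.le_def, Complex.re_sum] at this
      exact_mod_cast this.1
    rw [← Finset.mul_sum]
    linarith
  · exact (posSemidef_vecMulVec_self_star _).smul (by positivity)
  · rw [← Finset.smul_sum, sum_trineProj, smul_smul]
    norm_num
  · simp only [trineProj, smul_mul_assoc, trace_smul,
      vecMulVec_star_mul_self_of_unit (star_trine_dotProduct_self _),
      trace_vecMulVec_star_of_unit (star_trine_dotProduct_self _)]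
    norm_num
  · linarith [Real.one_lt_sqrt_two]
end
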